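/- Let V be a vector space over ℝ and let A, B : V →ₗ[ℝ] V be linear operators such that id − A is injective. Let u, u', w, f ∈ V satisfy the factored equation (id − A) ((id − B) u') = (id + A) ((id + B) u) + 2 • f, and suppose w satisfies the first split equation (id − A) w = (id + B) u + f. Then the second split equation holds: (id − B) u' = (id + A) w + f. -/

import Mathlib

/-! Since `id - A` commutes with `id + A`, applying it to `(id + A) w + f` and substituting the
first split step produces exactly the right-hand side of the factored equation, which is also
`(id - A) ((id - B) u')`; injectivity of `id - A` cancels it. -/

namespace LinearMap

variable {R M : Type*} [Ring R] [AddCommGroup M] [Module R M]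

theorem id_sub_apply_id_add_apply_comm (A : M →ₗ[R] M) (w : M) :
    (LinearMap.id - A : M →ₗ[R] M) ((LinearMap.id + A : M →ₗ[R] M) w) =
      (LinearMap.id + A : M →ₗ[R] M) ((LinearMap.id - A : M →ₗ[R] M) w) := by
  simp only [sub_apply, add_apply, id_apply, map_add, map_sub]
  abel

theorem id_sub_apply_id_add_apply_add_eq {A : M →ₗ[R] M} {w g f : M}
    (h : (LinearMap.id - A : M →ₗ[R] M) w = g + f) :
    (LinearMap.id - A : M →ₗ[R] M) ((LinearMap.id + A : M →ₗ[R] M) w + f) =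
      (LinearMap.id + A : M →ₗ[R] M) g + (2 : R) • f := by
  calc (LinearMap.id - A : M →ₗ[R] M) ((LinearMap.id + A : M →ₗ[R] M) w + f)
      = (LinearMap.id + A : M →ₗ[R] M) ((LinearMap.id - A : M →ₗ[R] M) w) +
          (LinearMap.id - A : M →ₗ[R] M) f := by
        rw [map_add, id_sub_apply_id_add_apply_comm]
    _ = (LinearMap.id + A : M →ₗ[R] M) g + (2 : R) • f := by
      rw [h]
      simp only [sub_apply, add_apply, id_apply, map_add, two_smul]
      abel

end LinearMap

/-- Converse direction: the factored equation together with the first split step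
determines the second split step, provided `id − A` is injective. -/
theorem adi_factored_implies_second_split
    {V : Type*} [AddCommGroup V] [Module ℝ V]
    (A B : V →ₗ[ℝ] V)
    (hA : Function.Injective (LinearMap.id - A : _ →ₗ[ℝ] _))
    (u u' w f : V)
    (hfac : (LinearMap.id - A : _ →ₗ[ℝ] _) ((LinearMap.id - B : _ →ₗ[ℝ] _) u') =
      (LinearMap.id + A : _ →ₗ[ℝ] _) ((LinearMap.id + B : _ →ₗ[ℝ] _) u) + (2 : ℝ) • f)
    (h1 : (LinearMap.id - A : _ →ₗ[ℝ] _) w = (LinearMap.id + B : _ →ₗ[ℝ] _) u + f) :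
    (LinearMap.id - B : _ →ₗ[ℝ] _) u' = (LinearMap.id + A : _ →ₗ[ℝ] _) w + f :=
  hA (hfac.trans (LinearMap.id_sub_apply_id_add_apply_add_eq h1).symm)
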